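/- arXiv:1608.03850 — 7 statements merged into one kernel-verified Lean document; each statement's English description precedes it below -/
import Mathlib

section
/- Let g₀ : ℂ → ℂ be entire with g₀(0) = 1. For every integer n ≥ 0 there exist complex constants c_{0,n}, …, c_{n−1,n}, depending only on g₀ and n (not on f or z), such that for every entire function f : ℂ → ℂ and every z ∈ ℂ one has (D_{0,g₀})ⁿ(f)(z) = (1/n!)·(∂ⁿ/∂tⁿ)[T_z(f)](t)|_{t=0} + Σ_{k=0}^{n−1} c_{k,n}·(∂ᵏ/∂tᵏ)[T_z(f)](t)|_{t=0}. In particular for n = 0 the formula reads f(z) = T_z(f)(0). -/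
open Complex

/-- The Pommiez operator `D_{0,g₀}` associated with `g₀`. -/
noncomputable def pommiez (g₀ f : ℂ → ℂ) : ℂ → ℂ := fun t =>
  if t = 0 then deriv f 0 - deriv g₀ 0 * f 0 else (f t - g₀ t * f 0) / t

/-- The shift operator `T_z` for the Pommiez operator `D_{0,g₀}`. -/
noncomputable def shiftT (g₀ f : ℂ → ℂ) (z : ℂ) : ℂ → ℂ := fun t =>
  if t = z then z * g₀ z * deriv f z - z * f z * deriv g₀ z + f z * g₀ z
  else (t * f t * g₀ z - z * f z * g₀ t) / (t - z)

/-!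
Both operators are difference quotients: `D_{0,g₀} f = dslope (f - f 0 • g₀) 0` and
`T_z f = dslope (t ↦ t f(t) g₀(z) - z f(z) g₀(t)) z`. Hence they preserve entire functions,
and on Taylor coefficients at `0` the Pommiez operator acts as the shift
`a_k(D f) = a_{k+1}(f) - f(0) a_{k+1}(g₀)`; iterating, `(Dⁿ f)(0)` is `a_n(f)` plus a combination
of `a_0(f), …, a_{n-1}(f)` with coefficients depending only on `g₀`. Finally `D` commutes with
`T_z` and `T_z f (0) = f(z)`, so `(Dⁿ f)(z) = (Dⁿ (T_z f))(0)`.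
-/

noncomputable def taylorCoeff {𝕜 : Type*} [NontriviallyNormedField 𝕜] (F : 𝕜 → 𝕜) (a : 𝕜)
    (k : ℕ) : 𝕜 :=
  iteratedDeriv k F a / k.factorial

section TaylorCoeff

variable {𝕜 : Type*} [NontriviallyNormedField 𝕜]

@[simp]
lemma taylorCoeff_zero (F : 𝕜 → 𝕜) (a : 𝕜) : taylorCoeff F a 0 = F a := by
  simp [taylorCoeff]

lemma taylorCoeff_sub_const_mul {F G : 𝕜 → 𝕜} {a : 𝕜} (c : 𝕜) (k : ℕ)
    (hF : ContDiffAt 𝕜 k F a) (hG : ContDiffAt 𝕜 k G a) :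
    taylorCoeff (fun t => F t - c * G t) a k = taylorCoeff F a k - c * taylorCoeff G a k := by
  have hcG : ContDiffAt 𝕜 k (fun t => c * G t) a := contDiffAt_const.mul hG
  simp only [taylorCoeff, iteratedDeriv_fun_sub hF hcG, iteratedDeriv_const_mul_field]
  ring

lemma taylorCoeff_dslope [CompleteSpace 𝕜] [CharZero 𝕜] {F : 𝕜 → 𝕜} {a : 𝕜}
    (hF : AnalyticAt 𝕜 F a) (k : ℕ) :
    taylorCoeff (dslope F a) a k = taylorCoeff F a (k + 1) := by
  have hseries := hF.hasFPowerSeriesAt.has_fpower_series_dslope_fslope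
  have hdslope := hseries.analyticAt.hasFPowerSeriesAt.eq_formalMultilinearSeries hseries
  have := congrArg (fun p => FormalMultilinearSeries.coeff p k) hdslope
  simp only [FormalMultilinearSeries.coeff_fslope, FormalMultilinearSeries.coeff_ofScalars] at this
  exact this

end TaylorCoeff

lemma Differentiable.dslope {F : ℂ → ℂ} (hF : Differentiable ℂ F) (a : ℂ) :
    Differentiable ℂ (dslope F a) :=
  differentiableOn_univ.mp <|
    (differentiableOn_dslope Filter.univ_mem).mpr hF.differentiableOn

section Pommiez

variable {g₀ f : ℂ → ℂ}

lemma pommiez_apply_of_ne {t : ℂ} (ht : t ≠ 0) : pommiez g₀ f t = (f t - g₀ t * f 0) / t :=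
  if_neg ht

lemma pommiez_eq_dslope (hg₀ : Differentiable ℂ g₀) (hg₀0 : g₀ 0 = 1)
    (hf : Differentiable ℂ f) :
    pommiez g₀ f = dslope (fun t => f t - f 0 * g₀ t) 0 := by
  funext t
  rcases eq_or_ne t 0 with rfl | ht
  · have hderiv : HasDerivAt (fun t => f t - f 0 * g₀ t) (deriv f 0 - f 0 * deriv g₀ 0) 0 :=
      (hf 0).hasDerivAt.sub ((hg₀ 0).hasDerivAt.const_mul (f 0))
    rw [dslope_same, hderiv.deriv, pommiez, if_pos rfl]
    ring
  · rw [dslope_of_ne _ ht, slope_def_field, pommiez_apply_of_ne ht, hg₀0]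
    ring

lemma differentiable_pommiez (hg₀ : Differentiable ℂ g₀) (hg₀0 : g₀ 0 = 1)
    (hf : Differentiable ℂ f) : Differentiable ℂ (pommiez g₀ f) := by
  rw [pommiez_eq_dslope hg₀ hg₀0 hf]
  exact Differentiable.dslope (by fun_prop) 0

lemma differentiable_pommiez_iterate (hg₀ : Differentiable ℂ g₀) (hg₀0 : g₀ 0 = 1)
    (hf : Differentiable ℂ f) (n : ℕ) : Differentiable ℂ ((pommiez g₀)^[n] f) :=
  Function.Iterate.rec (Differentiable ℂ) hf (fun _ => differentiable_pommiez hg₀ hg₀0) n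

lemma mul_pommiez_apply (hg₀0 : g₀ 0 = 1) (t : ℂ) :
    t * pommiez g₀ f t = f t - g₀ t * f 0 := by
  rcases eq_or_ne t 0 with rfl | ht
  · simp [hg₀0]
  · rw [pommiez_apply_of_ne ht]
    field_simp

lemma taylorCoeff_pommiez (hg₀ : Differentiable ℂ g₀) (hg₀0 : g₀ 0 = 1)
    (hf : Differentiable ℂ f) (k : ℕ) :
    taylorCoeff (pommiez g₀ f) 0 k = taylorCoeff f 0 (k + 1) - f 0 * taylorCoeff g₀ 0 (k + 1) := by
  have hF : Differentiable ℂ fun t => f t - f 0 * g₀ t := by fun_prop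
  rw [pommiez_eq_dslope hg₀ hg₀0 hf, taylorCoeff_dslope (hF.analyticAt 0),
    taylorCoeff_sub_const_mul _ _ hf.contDiff.contDiffAt hg₀.contDiff.contDiffAt]

lemma exists_pommiez_iterate_apply_zero_eq (hg₀ : Differentiable ℂ g₀) (hg₀0 : g₀ 0 = 1)
    (n : ℕ) : ∃ c : ℕ → ℂ, ∀ F : ℂ → ℂ, Differentiable ℂ F →
      (pommiez g₀)^[n] F 0 = taylorCoeff F 0 n + ∑ k ∈ Finset.range n, c k * taylorCoeff F 0 k := by
  induction n with
  | zero => exact ⟨0, fun F _ => by simp⟩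
  | succ n ih =>
    obtain ⟨c, hc⟩ := ih
    -- the constant term collects the `F 0`-parts of `taylorCoeff_pommiez`
    refine ⟨fun
      | 0 => -taylorCoeff g₀ 0 (n + 1) - ∑ k ∈ Finset.range n, c k * taylorCoeff g₀ 0 (k + 1)
      | k + 1 => c k, fun F hF => ?_⟩
    rw [Function.iterate_succ_apply, hc _ (differentiable_pommiez hg₀ hg₀0 hF),
      Finset.sum_range_succ', taylorCoeff_zero]
    simp only [taylorCoeff_pommiez hg₀ hg₀0 hF, mul_sub, Finset.sum_sub_distrib,
      mul_left_comm (c _) (F 0), ← Finset.mul_sum]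
    ring

lemma shiftT_apply_of_ne {z t : ℂ} (htz : t ≠ z) :
    shiftT g₀ f z t = (t * f t * g₀ z - z * f z * g₀ t) / (t - z) :=
  if_neg htz

lemma shiftT_eq_dslope (hg₀ : Differentiable ℂ g₀) (hf : Differentiable ℂ f) (z : ℂ) :
    shiftT g₀ f z = dslope (fun t => t * f t * g₀ z - z * f z * g₀ t) z := by
  funext t
  rcases eq_or_ne t z with rfl | htz
  · have hderiv : HasDerivAt (fun s => s * f s * g₀ t - t * f t * g₀ s)
        ((1 * f t + t * deriv f t) * g₀ t - t * f t * deriv g₀ t) t :=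
      (((hasDerivAt_id t).mul (hf t).hasDerivAt).mul_const (g₀ t)).sub
        ((hg₀ t).hasDerivAt.const_mul (t * f t))
    rw [dslope_same, hderiv.deriv, shiftT, if_pos rfl]
    ring
  · rw [dslope_of_ne _ htz, slope_def_field, shiftT_apply_of_ne htz, sub_self, sub_zero]

lemma differentiable_shiftT (hg₀ : Differentiable ℂ g₀) (hf : Differentiable ℂ f) (z : ℂ) :
    Differentiable ℂ (shiftT g₀ f z) := by
  rw [shiftT_eq_dslope hg₀ hf z]
  exact Differentiable.dslope (by fun_prop) z

lemma shiftT_apply_zero (hg₀0 : g₀ 0 = 1) (z : ℂ) : shiftT g₀ f z 0 = f z := by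
  rcases eq_or_ne z 0 with rfl | hz
  · simp [shiftT, hg₀0]
  · rw [shiftT_apply_of_ne hz.symm, hg₀0]
    field_simp
    ring

lemma pommiez_shiftT_comm (hg₀ : Differentiable ℂ g₀) (hg₀0 : g₀ 0 = 1)
    (hf : Differentiable ℂ f) (z : ℂ) :
    pommiez g₀ (shiftT g₀ f z) = shiftT g₀ (pommiez g₀ f) z := by
  have hL := differentiable_pommiez hg₀ hg₀0 (differentiable_shiftT hg₀ hf z)
  have hR := differentiable_shiftT hg₀ (differentiable_pommiez hg₀ hg₀0 hf) z
  -- both sides are continuous, so it suffices to compare the explicit quotients off `{0, z}`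
  refine hL.continuous.ext_on ((Set.toFinite {0, z}).countable.dense_compl ℂ) hR.continuous ?_
  rintro t ht
  simp only [Set.mem_compl_iff, Set.mem_insert_iff, Set.mem_singleton_iff, not_or] at ht
  obtain ⟨ht0, htz⟩ := ht
  have htz' : t - z ≠ 0 := sub_ne_zero.mpr htz
  rw [pommiez_apply_of_ne ht0, shiftT_apply_of_ne htz, shiftT_apply_of_ne htz,
    shiftT_apply_zero hg₀0, mul_pommiez_apply hg₀0, mul_pommiez_apply hg₀0]
  field_simp
  ring

lemma pommiez_iterate_shiftT_comm (hg₀ : Differentiable ℂ g₀) (hg₀0 : g₀ 0 = 1)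
    (hf : Differentiable ℂ f) (z : ℂ) (n : ℕ) :
    (pommiez g₀)^[n] (shiftT g₀ f z) = shiftT g₀ ((pommiez g₀)^[n] f) z := by
  induction n with
  | zero => rfl
  | succ n ih =>
    rw [Function.iterate_succ_apply', ih, Function.iterate_succ_apply',
      pommiez_shiftT_comm hg₀ hg₀0 (differentiable_pommiez_iterate hg₀ hg₀0 hf n) z]

end Pommiez

/-- for every `n ≥ 0` there exist constants `c k` (`k < n`), depending only
on `g₀` and `n`, such that for every entire `f` and every `z`,
`(D_{0,g₀})ⁿ(f)(z) = (1/n!)·(T_z f)⁽ⁿ⁾(0) + Σ_{k<n} c k · (T_z f)⁽ᵏ⁾(0)`. -/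
theorem pommiez_iterate_eq_functional_of_shift
    (g₀ : ℂ → ℂ) (hg₀ : Differentiable ℂ g₀) (hg₀0 : g₀ 0 = 1) :
    ∀ n : ℕ, ∃ c : ℕ → ℂ, ∀ f : ℂ → ℂ, Differentiable ℂ f → ∀ z : ℂ,
      (pommiez g₀)^[n] f z =
        (1 / (n.factorial : ℂ)) * iteratedDeriv n (shiftT g₀ f z) 0 +
          ∑ k ∈ Finset.range n, c k * iteratedDeriv k (shiftT g₀ f z) 0 := by
  intro n
  obtain ⟨c, hc⟩ := exists_pommiez_iterate_apply_zero_eq hg₀ hg₀0 n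
  refine ⟨fun k => c k / k.factorial, fun f hf z => ?_⟩
  rw [← shiftT_apply_zero (f := (pommiez g₀)^[n] f) hg₀0 z,
    ← pommiez_iterate_shiftT_comm hg₀ hg₀0 hf, hc _ (differentiable_shiftT hg₀ hf z)]
  simp only [taylorCoeff, div_mul_eq_mul_div, mul_div_assoc, one_mul]
end

section
/- Let f, g₀ : ℂ → ℂ be entire with g₀(0) = 1, and let α ∈ ℂ. Then for all z, t ∈ ℂ one has g₀(z)·t·f(t) − T_z(s ↦ (s − α)·f(s))(t) = −(z − α)·T_z(f)(t). -/
open Complex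

/-- for entire `f, g₀` with `g₀(0) = 1` and any `α ∈ ℂ`, for all `z, t ∈ ℂ`,
`g₀(z)·t·f(t) − T_z((M − αI)f)(t) = −(z − α)·T_z(f)(t)`, where `((M − αI)f)(s) = (s − α)·f(s)`. -/
theorem shiftT_shift_identity
    (f g₀ : ℂ → ℂ) (hf : Differentiable ℂ f) (hg₀ : Differentiable ℂ g₀)
    (hg₀0 : g₀ 0 = 1) (α : ℂ) (z t : ℂ) :
    g₀ z * t * f t - shiftT g₀ (fun s => (s - α) * f s) z t = -(z - α) * shiftT g₀ f z t := by
  unfold shiftT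
  by_cases h : t = z
  · subst h
    simp only [eq_self_iff_true, if_true]
    have hd : deriv (fun s => (s - α) * f s) t = f t + (t - α) * deriv f t := by
      have h1 : HasDerivAt (fun s => (s - α) * f s) (1 * f t + (t - α) * deriv f t) t :=
        (((hasDerivAt_id t).sub_const α).mul (hf t).hasDerivAt)
      simpa using h1.deriv
    rw [hd]
    ring
  · simp only [if_neg h]
    have hne : t - z ≠ 0 := sub_ne_zero.mpr h
    field_simp
    ring
end

section
/- Let (Q_n) be an increasing sequence of nonempty convex compact subsets of ℂ, and let H_{Q_n}(z) = sup_{t ∈ Q_n} Re(t·z) denote the support function of Q_n. Then for every n ∈ ℕ and every k ∈ ℕ there exist s ∈ ℕ and a constant C ≥ 0 such that for all z ∈ ℂ: sup_{|t−z|≤1} (H_{Q_n}(t) + |t|/s) + ln(1 + |z|) ≤ inf_{|t−z|≤1} (H_{Q_n}(t) + |t|/k) + C. -/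
/-
The support function of a set contained in the disc of radius `M` is `M`-Lipschitz, so on a
disc of radius one it oscillates by at most `2M`. Halving the linear term `|t|/k` frees
`|z|/(2k)` up to constants, and this absorbs `ln(1 + |z|)` by `ln x ≤ ln c + x/c - 1`
with `c = 2k`. Take `s = 2k`.
-/

open Complex Metric

/-- The support function `H_Ω(z) = sup_{t ∈ Ω} Re(t·z)` of a set `Ω ⊂ ℂ`. -/
noncomputable def supportFn (Ω : Set ℂ) (z : ℂ) : ℝ := sSup ((fun t => (t * z).re) '' Ω)

lemma supportFn_le_add_mul_norm_sub {Ω : Set ℂ} {M : ℝ} (hΩ : Ω.Nonempty)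
    (hM : ∀ q ∈ Ω, ‖q‖ ≤ M) (t t' : ℂ) :
    supportFn Ω t ≤ supportFn Ω t' + M * ‖t - t'‖ := by
  have re_mul_le : ∀ q ∈ Ω, ∀ w : ℂ, (q * w).re ≤ M * ‖w‖ := fun q hq w =>
    calc (q * w).re ≤ ‖q * w‖ := re_le_norm _
      _ = ‖q‖ * ‖w‖ := norm_mul _ _
      _ ≤ M * ‖w‖ := mul_le_mul_of_nonneg_right (hM q hq) (norm_nonneg _)
  have hbdd : BddAbove ((fun q => (q * t').re) '' Ω) :=
    ⟨M * ‖t'‖, by rintro _ ⟨q, hq, rfl⟩; exact re_mul_le q hq t'⟩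
  refine csSup_le (hΩ.image _) ?_
  rintro _ ⟨q, hq, rfl⟩
  show (q * t).re ≤ _
  have hsplit : (q * t).re = (q * t').re + (q * (t - t')).re := by
    rw [mul_sub, sub_re]; ring
  rw [hsplit]
  exact add_le_add (le_csSup hbdd ⟨q, hq, rfl⟩) (re_mul_le q hq _)

lemma Real.log_le_log_add_div_sub_one {x c : ℝ} (hx : 0 < x) (hc : 0 < c) :
    Real.log x ≤ Real.log c + x / c - 1 := by
  have h := Real.log_le_sub_one_of_pos (div_pos hx hc)
  rw [Real.log_div hx.ne' hc.ne'] at h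
  linarith

lemma csSup_image_add_le_csInf_image_add {α : Type*} {S : Set α} {f g : α → ℝ} {a c : ℝ}
    (hS : S.Nonempty) (h : ∀ t ∈ S, ∀ t' ∈ S, f t + a ≤ g t' + c) :
    sSup (f '' S) + a ≤ sInf (g '' S) + c := by
  have hinf : ∀ t ∈ S, f t + a - c ≤ sInf (g '' S) := fun t ht =>
    le_csInf (hS.image g) (by rintro _ ⟨t', ht', rfl⟩; linarith [h t ht t' ht'])
  have hsup : sSup (f '' S) ≤ sInf (g '' S) + c - a :=
    csSup_le (hS.image f) (by rintro _ ⟨t, ht, rfl⟩; linarith [hinf t ht])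
  linarith

lemma supportFn_add_norm_div_add_log_le {Ω : Set ℂ} {M k : ℝ} (hΩ : Ω.Nonempty)
    (hM : ∀ q ∈ Ω, ‖q‖ ≤ M) (hk : 0 < k) {z t t' : ℂ} (ht : t ∈ closedBall z 1)
    (ht' : t' ∈ closedBall z 1) :
    supportFn Ω t + ‖t‖ / (2 * k) + Real.log (1 + ‖z‖) ≤
      supportFn Ω t' + ‖t'‖ / k + (2 * M + Real.log (2 * k) + 2 / k) := by
  have hM0 : 0 ≤ M := (norm_nonneg _).trans (hM _ hΩ.some_mem)
  have ht_le : ‖t‖ ≤ ‖z‖ + 1 := norm_le_of_mem_closedBall ht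
  have hz_le : ‖z‖ ≤ ‖t'‖ + 1 := norm_le_of_mem_closedBall (mem_closedBall_comm.mp ht')
  have hdist : ‖t - t'‖ ≤ 2 := by
    rw [← dist_eq_norm]
    linarith [dist_triangle_right t t' z, mem_closedBall.mp ht, mem_closedBall.mp ht']
  have hlip : supportFn Ω t ≤ supportFn Ω t' + 2 * M :=
    (supportFn_le_add_mul_norm_sub hΩ hM t t').trans (by nlinarith)
  have hlog := Real.log_le_log_add_div_sub_one (by positivity : 0 < 1 + ‖z‖)
    (by positivity : 0 < 2 * k)
  have hlin : ‖t‖ / (2 * k) + (1 + ‖z‖) / (2 * k) ≤ ‖t'‖ / k + 2 / k := by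
    rw [← add_div, ← add_div, div_le_div_iff₀ (by positivity) hk]
    nlinarith
  linarith

theorem support_function_weight_estimate_general
    (Q : ℕ → Set ℂ) (hQc : ∀ n, IsCompact (Q n)) (hQne : ∀ n, (Q n).Nonempty) :
    ∀ n k : ℕ, 0 < k → ∃ s : ℕ, 0 < s ∧ ∃ C : ℝ, 0 ≤ C ∧ ∀ z : ℂ,
      sSup ((fun t => supportFn (Q n) t + ‖t‖ / (s : ℝ)) '' Metric.closedBall z 1) +
          Real.log (1 + ‖z‖) ≤
        sInf ((fun t => supportFn (Q n) t + ‖t‖ / (k : ℝ)) '' Metric.closedBall z 1) + C := by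
  intro n k hk
  have hk' : (1 : ℝ) ≤ k := by exact_mod_cast hk
  obtain ⟨M, hM⟩ := (hQc n).isBounded.exists_norm_le
  have hM0 : 0 ≤ M := (norm_nonneg _).trans (hM _ (hQne n).some_mem)
  have hlog : 0 ≤ Real.log (2 * k) := Real.log_nonneg (by linarith)
  refine ⟨2 * k, by positivity, 2 * M + Real.log (2 * k) + 2 / k, by positivity, fun z => ?_⟩
  push_cast
  exact csSup_image_add_le_csInf_image_add ⟨z, mem_closedBall_self zero_le_one⟩
    fun t ht t' ht' => supportFn_add_norm_div_add_log_le (hQne n) hM (by positivity) ht ht'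

/-- for an increasing sequence `(Q n)` of nonempty convex compact subsets
of `ℂ`, the weights `v_{n,k}(z) = H_{Q n}(z) + |z|/k` satisfy: for all `n, k` there exist
`s` and `C ≥ 0` with
`sup_{|t−z|≤1}(H_{Q n}(t) + |t|/s) + ln(1+|z|) ≤ inf_{|t−z|≤1}(H_{Q n}(t) + |t|/k) + C`
for all `z ∈ ℂ`. -/
theorem support_function_weight_estimate
    (Q : ℕ → Set ℂ) (hQc : ∀ n, IsCompact (Q n)) (hQne : ∀ n, (Q n).Nonempty)
    (hQconv : ∀ n, Convex ℝ (Q n)) (hQmono : Monotone Q) :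
    ∀ n k : ℕ, 0 < k → ∃ s : ℕ, 0 < s ∧ ∃ C : ℝ, 0 ≤ C ∧ ∀ z : ℂ,
      sSup ((fun t => supportFn (Q n) t + ‖t‖ / (s : ℝ)) '' Metric.closedBall z 1) +
          Real.log (1 + ‖z‖) ≤
        sInf ((fun t => supportFn (Q n) t + ‖t‖ / (k : ℝ)) '' Metric.closedBall z 1) + C :=
  support_function_weight_estimate_general Q hQc hQne
end

section
/- Let α, β ∈ ℂ with α ≠ β, let y : ℂ → ℂ be continuous on the segment [α, β], and define the entire function U(z) = e^{αz} · ∫_{[α,β]} y(η)·e^{−zη} dη. If there exists a polynomial P with complex coefficients such that U(z) = P(z) for all z ∈ ℂ, then y(η) = 0 for every η in the segment [α, β]. -/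
/-!
Put `f s = y (α + s (β - α))`. Substituting `η = α + s (β - α)` turns `U` into
`(β - α) · L (z (β - α))`, where `L w = ∫₀¹ f s e^{-w s} ds` is the finite Laplace transform
of `f`. By dominated convergence `L t → 0` as `t → +∞` along the reals, so the polynomial `P`
tends to `0` along a ray going to infinity and must be `0`; hence `L` vanishes identically.
In particular all moments `∫₀¹ (e^{-s})ⁿ f s ds` vanish. The injective real function `e^{-s}`
generates a dense star subalgebra of `C([0, 1], ℂ)` (Stone–Weierstrass), so `f` is orthogonal
to `conj f`, i.e. `∫₀¹ |f|² = 0`, and the continuous `f` vanishes on `[0, 1]`.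
-/

open MeasureTheory Set Filter Topology Complex intervalIntegral

section MomentUniqueness

variable {X : Type*} [TopologicalSpace X] [CompactSpace X] [MeasurableSpace X] [BorelSpace X]
  (μ : Measure X) [IsFiniteMeasure μ]

noncomputable def integralMulCLM (g : C(X, ℂ)) : C(X, ℂ) →L[ℂ] ℂ :=
  (L1.integralCLM' ℂ).comp
    ((ContinuousMap.toLp 1 μ ℂ).comp ((ContinuousLinearMap.mul ℂ C(X, ℂ)).flip g))

theorem integralMulCLM_apply (g u : C(X, ℂ)) : integralMulCLM μ g u = ∫ x, u x * g x ∂μ := by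
  simp only [integralMulCLM, ContinuousLinearMap.comp_apply, ContinuousLinearMap.flip_apply,
    ContinuousLinearMap.mul_apply']
  rw [← L1.integral_eq', L1.integral_eq_integral]
  exact integral_congr_ae (ContinuousMap.coeFn_toLp μ _)

variable {μ}

theorem ae_eq_zero_of_forall_integral_mul_eq_zero {A : StarSubalgebra ℂ C(X, ℂ)}
    (hA : A.SeparatesPoints) {g : C(X, ℂ)} (h : ∀ u ∈ A, ∫ x, u x * g x ∂μ = 0) :
    g =ᵐ[μ] 0 := by
  have hA_sub : (A : Set C(X, ℂ)) ⊆ {u | integralMulCLM μ g u = 0} := fun u hu => by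
    simpa [integralMulCLM_apply] using h u hu
  have hA_dense : closure (A : Set C(X, ℂ)) = univ := by
    rw [← StarSubalgebra.topologicalClosure_coe,
      ContinuousMap.starSubalgebra_topologicalClosure_eq_top_of_separatesPoints A hA]
    rfl
  have hstar : ∫ x, star g x * g x ∂μ = 0 := by
    rw [← integralMulCLM_apply]
    exact closure_minimal hA_sub (isClosed_eq (integralMulCLM μ g).continuous continuous_const)
      (hA_dense ▸ mem_univ (star g))
  have hnormSq : ∫ x, normSq (g x) ∂μ = 0 := by
    simp only [ContinuousMap.star_apply, RCLike.star_def, ← normSq_eq_conj_mul_self] at hstar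
    rwa [integral_complex_ofReal, ofReal_eq_zero] at hstar
  have hint : Integrable (fun x => normSq (g x)) μ :=
    (continuous_normSq.comp g.continuous).integrable_of_hasCompactSupport
      (HasCompactSupport.of_compactSpace _)
  filter_upwards [(integral_eq_zero_iff_of_nonneg (fun x => normSq_nonneg (g x)) hint).1 hnormSq]
    with x hx using normSq_eq_zero.1 hx

theorem ae_eq_zero_of_forall_integral_pow_mul_eq_zero {e g : C(X, ℂ)}
    (he_inj : Function.Injective e) (he_sa : IsSelfAdjoint e)
    (h : ∀ n : ℕ, ∫ x, e x ^ n * g x ∂μ = 0) : g =ᵐ[μ] 0 := by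
  have hspan : Subalgebra.toSubmodule (StarAlgebra.adjoin ℂ {e}).toSubalgebra ≤
      LinearMap.ker (integralMulCLM μ g : C(X, ℂ) →ₗ[ℂ] ℂ) := by
    rw [StarAlgebra.adjoin_eq_span, star_singleton, he_sa.star_eq, union_self,
      ← Submonoid.powers_eq_closure, Submonoid.coe_powers, Submodule.span_le]
    rintro _ ⟨n, rfl⟩
    simpa [integralMulCLM_apply] using h n
  refine ae_eq_zero_of_forall_integral_mul_eq_zero
    (fun x y hxy => ⟨e, ⟨e, StarAlgebra.self_mem_adjoin_singleton ℂ e, rfl⟩, he_inj.ne hxy⟩)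
    fun u hu => ?_
  rw [← integralMulCLM_apply]
  exact hspan hu

end MomentUniqueness

theorem Polynomial.eq_zero_of_tendsto_eval_zero {𝕜 ι : Type*} [NormedField 𝕜] {l : Filter ι}
    [l.NeBot] {P : Polynomial 𝕜} {z : ι → 𝕜} (hz : Tendsto (fun i => ‖z i‖) l atTop)
    (hP : Tendsto (fun i => P.eval (z i)) l (𝓝 0)) : P = 0 := by
  by_cases hdeg : 0 < P.degree
  · exact absurd (P.tendsto_norm_atTop hdeg hz) (not_tendsto_atTop_of_tendsto_nhds hP.norm)
  · rw [Polynomial.eq_C_of_degree_le_zero (not_lt.1 hdeg)] at hP ⊢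
    simp only [Polynomial.eval_C, tendsto_const_nhds_iff] at hP
    rw [hP, Polynomial.C_0]

noncomputable def finiteLaplace (f : ℝ → ℂ) (w : ℂ) : ℂ :=
  ∫ s in (0:ℝ)..1, f s * exp (-w * s)

theorem tendsto_finiteLaplace_ofReal_atTop {f : ℝ → ℂ} (hf : IntervalIntegrable f volume 0 1) :
    Tendsto (fun t : ℝ => finiteLaplace f t) atTop (𝓝 0) := by
  have hlim : ∀ s ∈ Ioc (0:ℝ) 1, Tendsto (fun t : ℝ => f s * exp (-t * s)) atTop (𝓝 0) := by
    intro s hs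
    rw [← mul_zero (f s)]
    refine tendsto_const_nhds.mul (tendsto_zero_iff_norm_tendsto_zero.2 ?_)
    simp only [norm_exp, neg_mul, neg_re, mul_re, ofReal_re, ofReal_im, mul_zero, sub_zero]
    exact Real.tendsto_exp_atBot.comp
      (tendsto_neg_atTop_atBot.comp (tendsto_id.atTop_mul_const hs.1))
  have hbound : ∀ t ≥ (0:ℝ), ∀ s ∈ Ioc (0:ℝ) 1, ‖f s * exp (-t * s)‖ ≤ ‖f s‖ := by
    intro t ht s hs
    rw [norm_mul, norm_exp]
    refine mul_le_of_le_one_right (norm_nonneg _) (Real.exp_le_one_iff.2 ?_)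
    simp only [neg_mul, neg_re, mul_re, ofReal_re, ofReal_im, mul_zero, sub_zero, neg_nonpos]
    exact mul_nonneg ht hs.1.le
  simpa [finiteLaplace] using
    tendsto_integral_filter_of_dominated_convergence (fun s => ‖f s‖)
      (Eventually.of_forall fun t =>
        (hf.mul_continuousOn (by fun_prop)).aestronglyMeasurable_restrict_uIoc)
      ((eventually_ge_atTop 0).mono fun t ht => Eventually.of_forall fun s hs =>
        hbound t ht s (by simpa using hs))
      hf.norm (Eventually.of_forall fun s hs => hlim s (by simpa using hs))

theorem eqOn_zero_of_finiteLaplace_natCast_eq_zero {f : ℝ → ℂ} (hf : ContinuousOn f (Icc 0 1))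
    (h : ∀ n : ℕ, finiteLaplace f n = 0) : EqOn f 0 (Icc 0 1) := by
  let μ : Measure (Icc (0:ℝ) 1) := volume.comap Subtype.val
  have hemb : MeasurableEmbedding (Subtype.val : Icc (0:ℝ) 1 → ℝ) :=
    MeasurableEmbedding.subtype_coe measurableSet_Icc
  have : IsFiniteMeasure μ :=
    ⟨by rw [hemb.comap_apply, image_univ, Subtype.range_coe]; exact measure_Icc_lt_top⟩
  let e : C(Icc (0:ℝ) 1, ℂ) := ⟨fun s => (Real.exp (-s) : ℂ), by fun_prop⟩
  have he_inj : Function.Injective e := fun s t hst =>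
    Subtype.val_injective (neg_injective (Real.exp_injective (ofReal_injective hst)))
  have he_sa : IsSelfAdjoint e := by
    ext s
    simp [e, ← exp_conj]
  let g : C(Icc (0:ℝ) 1, ℂ) := ⟨(Icc 0 1).domRestrict f, hf.domRestrict⟩
  have hmoment : ∀ n : ℕ, ∫ s, e s ^ n * g s ∂μ = 0 := fun n => by
    rw [← h n, finiteLaplace, integral_of_le zero_le_one, ← integral_Icc_eq_integral_Ioc,
      ← integral_subtype_comap measurableSet_Icc]
    refine integral_congr_ae (Eventually.of_forall fun s => ?_)
    simp [e, g, ← exp_nat_mul, mul_comm]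
  have hae : ∀ᵐ s ∂volume.restrict (Icc (0:ℝ) 1), f s = 0 :=
    (ae_restrict_iff_subtype measurableSet_Icc).2
      (ae_eq_zero_of_forall_integral_pow_mul_eq_zero he_inj he_sa hmoment)
  exact Measure.eqOn_Icc_of_ae_eq volume zero_ne_one hae hf continuousOn_const

theorem Complex.segment_eq_image_ofReal_mul (α β : ℂ) :
    segment ℝ α β = (fun s : ℝ => α + s * (β - α)) '' Icc 0 1 := by
  simp only [segment_eq_image', real_smul]

theorem exp_mul_segmentIntegral_eq_mul_finiteLaplace (α β z : ℂ) (y : ℂ → ℂ) :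
    exp (α * z) * ((β - α) * ∫ s in (0:ℝ)..1,
        y (α + s * (β - α)) * exp (-z * (α + s * (β - α)))) =
      (β - α) * finiteLaplace (fun s : ℝ => y (α + s * (β - α))) (z * (β - α)) := by
  have hintegrand : ∀ s : ℝ, y (α + s * (β - α)) * exp (-z * (α + s * (β - α))) =
      exp (-z * α) * (y (α + s * (β - α)) * exp (-(z * (β - α)) * s)) := fun s => by
    rw [← mul_left_comm, ← exp_add]
    ring_nf
  simp only [hintegrand, intervalIntegral.integral_const_mul, finiteLaplace]
  rw [mul_left_comm, ← mul_assoc (exp (α * z)), ← exp_add, show α * z + -z * α = 0 by ring,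
    exp_zero, one_mul]

/-- Lemma 18: if `y` is continuous on the segment `[α, β]` (`α ≠ β`) and
the entire function `U(z) = e^{αz}·∫_{[α,β]} y(η)e^{−zη} dη` is a polynomial,
then `y = 0` on `[α, β]`. -/
theorem segment_integral_polynomial_implies_zero
    (α β : ℂ) (hαβ : α ≠ β) (y : ℂ → ℂ) (hy : ContinuousOn y (segment ℝ α β))
    (P : Polynomial ℂ)
    (hU : ∀ z : ℂ,
      Complex.exp (α * z) *
        ((β - α) * ∫ s in (0:ℝ)..1,
          y (α + (s : ℂ) * (β - α)) * Complex.exp (-z * (α + (s : ℂ) * (β - α)))) =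
      P.eval z) :
    ∀ η ∈ segment ℝ α β, y η = 0 := by
  set Δ := β - α
  have hΔ : Δ ≠ 0 := sub_ne_zero.2 hαβ.symm
  set f : ℝ → ℂ := fun s => y (α + s * Δ)
  have hf : ContinuousOn f (Icc 0 1) :=
    hy.comp (by fun_prop) (segment_eq_image_ofReal_mul α β ▸ mapsTo_image _ _)
  have hPf : ∀ z, P.eval z = Δ * finiteLaplace f (z * Δ) := fun z =>
    (hU z).symm.trans (exp_mul_segmentIntegral_eq_mul_finiteLaplace α β z y)
  have hP : P = 0 := by
    refine Polynomial.eq_zero_of_tendsto_eval_zero (l := atTop) (z := fun t : ℝ => t / Δ) ?_ ?_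
    · simpa [norm_div] using tendsto_abs_atTop_atTop.atTop_div_const (norm_pos_iff.2 hΔ)
    · simpa [hPf, div_mul_cancel₀ _ hΔ] using
        (tendsto_finiteLaplace_ofReal_atTop (hf.intervalIntegrable_of_Icc zero_le_one)).const_mul Δ
  have hf_laplace : ∀ n : ℕ, finiteLaplace f n = 0 := fun n => by
    simpa [hP, hΔ, div_mul_cancel₀ _ hΔ] using (hPf (n / Δ)).symm
  rw [segment_eq_image_ofReal_mul]
  rintro _ ⟨s, hs, rfl⟩
  exact eqOn_zero_of_finiteLaplace_natCast_eq_zero hf hf_laplace hs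
end

section
/- Let α, β ∈ ℂ with α ≠ β, write α − β = ρ·e^{iφ} with ρ > 0 and φ ∈ ℝ, let y : ℂ → ℂ be continuous on the segment [α, β], and define U(z) = e^{αz} · ∫_{[α,β]} y(η)·e^{−zη} dη. Then U(−t·e^{−iφ}) → 0 as the real parameter t → +∞. -/
open Complex intervalIntegral Filter MeasureTheory Topology

/-!
After the factor `e^{αz}` is moved inside, the integrand becomes `y(η(s))·e^{-z(η(s) - α)}` with
`η(s) = α + s(β - α)`. The direction `z = -t e^{-iφ}` is chosen so that `z(β - α) = tρ` is real
and positive, hence the integrand is `y(η(s))·e^{-tρs}`, which tends to `0` for every `s > 0`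
while staying bounded by `|y(η(s))|`; dominated convergence finishes the proof.
-/

theorem tendsto_intervalIntegral_mul_exp_neg_mul_atTop {g : ℝ → ℂ} {b : ℝ} (hb : 0 ≤ b)
    (hg : IntervalIntegrable g volume 0 b) :
    Tendsto (fun t : ℝ => ∫ s in (0:ℝ)..b, g s * exp (-((t : ℂ) * s))) atTop (𝓝 0) := by
  simp_rw [intervalIntegral.integral_of_le hb]
  rw [intervalIntegrable_iff_integrableOn_Ioc_of_le hb] at hg
  have hexp_norm (t s : ℝ) : ‖exp (-((t : ℂ) * s))‖ = Real.exp (-(t * s)) := by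
    rw [norm_exp]; norm_cast
  have hdecay : ∀ s ∈ Set.Ioc 0 b,
      Tendsto (fun t : ℝ => g s * exp (-((t : ℂ) * s))) atTop (𝓝 0) := by
    intro s hs
    rw [← mul_zero (g s)]
    refine (tendsto_zero_iff_norm_tendsto_zero.2 ?_).const_mul (g s)
    simp_rw [hexp_norm]
    exact Real.tendsto_exp_atBot.comp
      (tendsto_neg_atTop_atBot.comp (tendsto_id.atTop_mul_const hs.1))
  rw [show (0 : ℂ) = ∫ _ in Set.Ioc 0 b, (0 : ℂ) by simp]
  refine tendsto_integral_filter_of_dominated_convergence (fun s => ‖g s‖) ?_ ?_ hg.norm ?_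
  · exact Eventually.of_forall fun t => hg.aestronglyMeasurable.mul
      (by fun_prop : Continuous fun s : ℝ => exp (-((t : ℂ) * s))).aestronglyMeasurable
  · filter_upwards [eventually_ge_atTop 0] with t ht
    refine (ae_restrict_iff' measurableSet_Ioc).2 (Eventually.of_forall fun s hs => ?_)
    rw [norm_mul, hexp_norm]
    exact mul_le_of_le_one_right (norm_nonneg _)
      (Real.exp_le_one_iff.2 (neg_nonpos.2 (mul_nonneg ht hs.1.le)))
  · exact (ae_restrict_iff' measurableSet_Ioc).2 (Eventually.of_forall hdecay)

theorem continuousOn_comp_segment_param {E : Type*} [TopologicalSpace E] {y : ℂ → E} {α β : ℂ}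
    (hy : ContinuousOn y (segment ℝ α β)) :
    ContinuousOn (fun s : ℝ => y (α + s * (β - α))) (Set.Icc 0 1) := by
  refine hy.comp (by fun_prop) fun s hs => ?_
  rw [segment_eq_image']
  exact ⟨s, hs, by simp [real_smul]⟩

theorem segment_integral_tendsto_zero_general
    (α β : ℂ) (ρ φ : ℝ) (hρ : 0 < ρ)
    (hpolar : α - β = (ρ : ℂ) * Complex.exp (Complex.I * (φ : ℂ)))
    (y : ℂ → ℂ) (hy : ContinuousOn y (segment ℝ α β)) :
    Tendsto
      (fun t : ℝ =>
        Complex.exp (α * (-(t : ℂ) * Complex.exp (-(Complex.I * (φ : ℂ))))) *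
          ((β - α) * ∫ s in (0:ℝ)..1,
            y (α + (s : ℂ) * (β - α)) *
              Complex.exp (-(-(t : ℂ) * Complex.exp (-(Complex.I * (φ : ℂ)))) *
                (α + (s : ℂ) * (β - α)))))
      atTop (nhds 0) := by
  have hdir (t : ℝ) : -(t : ℂ) * exp (-(I * φ)) * (β - α) = ((t * ρ : ℝ) : ℂ) := by
    have hrot : exp (-(I * φ)) * exp (I * φ) = 1 := by rw [← exp_add, neg_add_cancel, exp_zero]
    push_cast
    linear_combination (t : ℂ) * hpolar * exp (-(I * φ)) + (t : ℂ) * ρ * hrot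
  have hg : IntervalIntegrable (fun s : ℝ => y (α + s * (β - α))) volume 0 1 :=
    (continuousOn_comp_segment_param hy).intervalIntegrable_of_Icc zero_le_one
  have hlim := ((tendsto_intervalIntegral_mul_exp_neg_mul_atTop zero_le_one hg).comp
    (tendsto_id.atTop_mul_const hρ)).const_mul (β - α)
  rw [mul_zero] at hlim
  refine hlim.congr fun t => ?_
  simp only [Function.comp_apply, id, mul_left_comm (exp _) (β - α),
    ← intervalIntegral.integral_const_mul]
  refine integral_congr fun s _ => ?_
  simp only [mul_left_comm (exp _) (y _), ← exp_add]
  congr 3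
  linear_combination (s : ℂ) * hdir t

/-- with `α − β = ρ·e^{iφ}`, `ρ > 0`, `φ ∈ ℝ`, and `y` continuous on
`[α, β]`, the function `U(z) = e^{αz}·∫_{[α,β]} y(η)e^{−zη} dη` satisfies
`U(−t·e^{−iφ}) → 0` as the real parameter `t → +∞`. -/
theorem segment_integral_tendsto_zero
    (α β : ℂ) (hαβ : α ≠ β) (ρ φ : ℝ) (hρ : 0 < ρ)
    (hpolar : α - β = (ρ : ℂ) * Complex.exp (Complex.I * (φ : ℂ)))
    (y : ℂ → ℂ) (hy : ContinuousOn y (segment ℝ α β)) :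
    Tendsto
      (fun t : ℝ =>
        Complex.exp (α * (-(t : ℂ) * Complex.exp (-(Complex.I * (φ : ℂ))))) *
          ((β - α) * ∫ s in (0:ℝ)..1,
            y (α + (s : ℂ) * (β - α)) *
              Complex.exp (-(-(t : ℂ) * Complex.exp (-(Complex.I * (φ : ℂ)))) *
                (α + (s : ℂ) * (β - α)))))
      atTop (nhds 0) :=
  segment_integral_tendsto_zero_general α β ρ φ hρ hpolar y hy
end

section
/- Let x : ℂ → ℂ be entire, fix z ∈ ℂ, and define Y(t) = ∫_{[0,t]} x(η)·e^{−zη} dη. Then for every integer j ≥ 1 and every t ∈ ℂ, the j-th derivative in t satisfies (d/dt)^j ( e^{zt}·Y(t) ) = z^j·e^{zt}·Y(t) + Σ_{s=1}^{j} C(j,s)·z^{j−s} · Σ_{r=0}^{s−1} C(s−1,r)·(−1)^r·z^r·x^{(s−1−r)}(t), where C(·,·) are binomial coefficients and x^{(m)} is the m-th derivative of x. -/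
/-!
By Morera's theorem the entire function `x(η) e^{-zη}` has a primitive, so the fundamental theorem
of calculus along `s ↦ s t` shows that `Y` is such a primitive: `Y' = x e^{-z·}`. The formula is then
Leibniz's rule applied twice, first to `e^{zt} · Y` and then to `Y^{(s)} = (e^{-z·} x)^{(s-1)}`,
after which the factors `e^{zt} e^{-zt}` cancel.
-/

open Complex intervalIntegral Finset

namespace Complex

variable {f : ℂ → ℂ}

theorem mul_integral_comp_ofReal_mul_eq_sub {F : ℂ → ℂ} (hF : ∀ w, HasDerivAt F (f w) w)
    (hf : Continuous f) (t : ℂ) :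
    t * ∫ s in (0:ℝ)..1, f (s * t) = F t - F 0 := by
  have hderiv : ∀ s ∈ Set.uIcc (0:ℝ) 1,
      HasDerivAt (fun s : ℝ => F (s * t)) (f (s * t) * t) s := fun s _ =>
    ((hF _).comp (s : ℂ) (hasDerivAt_mul_const t)).comp_ofReal
  have hint : IntervalIntegrable (fun s : ℝ => f (s * t) * t) MeasureTheory.volume 0 1 :=
    ((hf.comp (continuous_ofReal.mul continuous_const)).mul continuous_const).intervalIntegrable _ _
  rw [mul_comm, ← intervalIntegral.integral_mul_const, integral_eq_sub_of_hasDerivAt hderiv hint]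
  simp

theorem _root_.Differentiable.hasDerivAt_mul_integral_comp_ofReal_mul (hf : Differentiable ℂ f)
    (t : ℂ) : HasDerivAt (fun t => t * ∫ s in (0:ℝ)..1, f (s * t)) (f t) t := by
  obtain ⟨F, hF⟩ := hf.isExactOn_univ
  have hF' : ∀ w, HasDerivAt F (f w) w := fun w => hF w (Set.mem_univ w)
  simp_rw [mul_integral_comp_ofReal_mul_eq_sub hF' hf.continuous]
  exact (hF' t).sub_const _

theorem iteratedDeriv_cexp_const_mul_mul {n : ℕ} {t : ℂ} (c : ℂ) (hf : ContDiffAt ℂ n f t) :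
    iteratedDeriv n (fun w => exp (c * w) * f w) t =
      ∑ i ∈ range (n + 1), (n.choose i : ℂ) * c ^ (n - i) * exp (c * t) * iteratedDeriv i f t := by
  have he : ContDiffAt ℂ n (fun w => exp (c * w)) t := by fun_prop
  simp only [mul_comm (exp _), iteratedDeriv_fun_mul hf he, iteratedDeriv_cexp_const_mul]
  exact sum_congr rfl fun i _ => by ring

theorem iteratedDeriv_mul_cexp_const_mul {n : ℕ} {t : ℂ} (c : ℂ) (hf : ContDiffAt ℂ n f t) :
    iteratedDeriv n (fun w => f w * exp (c * w)) t =
      ∑ i ∈ range (n + 1), (n.choose i : ℂ) * c ^ i * exp (c * t) * iteratedDeriv (n - i) f t := by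
  have he : ContDiffAt ℂ n (fun w => exp (c * w)) t := by fun_prop
  simp only [mul_comm (f _), iteratedDeriv_fun_mul he hf, iteratedDeriv_cexp_const_mul]
  exact sum_congr rfl fun i _ => by ring

end Complex

/-- for entire `x`, fixed `z`, and
`Y(t) = ∫_{[0,t]} x(η)e^{−zη} dη`, for every `j ≥ 1` and every `t`,
`(d/dt)^j (e^{zt}·Y(t)) = z^j·e^{zt}·Y(t) + Σ_{s=1}^{j} C(j,s)·z^{j−s}·
  Σ_{r=0}^{s−1} C(s−1,r)·(−1)^r·z^r·x^{(s−1−r)}(t)`. -/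
theorem iteratedDeriv_exp_mul_segment_integral
    (x : ℂ → ℂ) (hx : Differentiable ℂ x) (z : ℂ)
    (Y : ℂ → ℂ)
    (hY : Y = fun t => t * ∫ s in (0:ℝ)..1, x ((s : ℂ) * t) * Complex.exp (-z * ((s : ℂ) * t))) :
    ∀ j : ℕ, 1 ≤ j → ∀ t : ℂ,
      iteratedDeriv j (fun w => Complex.exp (z * w) * Y w) t =
        z ^ j * Complex.exp (z * t) * Y t +
          ∑ s ∈ Finset.Icc 1 j, (j.choose s : ℂ) * z ^ (j - s) *
            ∑ r ∈ Finset.range s,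
              ((s - 1).choose r : ℂ) * (-1) ^ r * z ^ r * iteratedDeriv (s - 1 - r) x t := by
  intro j _ t
  have hYderiv : ∀ w, HasDerivAt Y (x w * exp (-z * w)) w := by
    have hg : Differentiable ℂ fun w => x w * exp (-z * w) := by fun_prop
    exact hY ▸ hg.hasDerivAt_mul_integral_comp_ofReal_mul
  have hYdiff : Differentiable ℂ Y := fun w => (hYderiv w).differentiableAt
  have hY_succ : ∀ m, iteratedDeriv (m + 1) Y t = ∑ r ∈ range (m + 1),
      (m.choose r : ℂ) * (-z) ^ r * exp (-z * t) * iteratedDeriv (m - r) x t := fun m => by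
    rw [iteratedDeriv_succ', funext fun w => (hYderiv w).deriv,
      iteratedDeriv_mul_cexp_const_mul _ hx.contDiff.contDiffAt]
  have hexp : exp (z * t) * exp (-z * t) = 1 := by rw [← exp_add]; simp
  rw [iteratedDeriv_cexp_const_mul_mul z hYdiff.contDiff.contDiffAt, range_eq_Ico,
    sum_eq_sum_Ico_succ_bot j.succ_pos, zero_add, Nat.succ_eq_add_one, Ico_add_one_right_eq_Icc]
  congr 1
  · simp
  refine sum_congr rfl fun s hs => ?_
  obtain ⟨m, rfl⟩ : ∃ m, s = m + 1 := ⟨s - 1, by grind⟩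
  rw [hY_succ, Nat.add_sub_cancel]
  simp only [Finset.mul_sum]
  refine sum_congr rfl fun r _ => ?_
  rw [neg_pow]
  linear_combination ((j.choose (m + 1) : ℂ) * z ^ (j - (m + 1)) * (m.choose r) * (-1) ^ r * z ^ r *
    iteratedDeriv (m - r) x t) * hexp
end

section
/- Let g₀ : ℂ → ℂ be entire with g₀(0) = 1, let f be entire, and let P be a polynomial. If α ∈ ℂ is a common zero of P and g₀ (i.e., P(α) = 0 and g₀(α) = 0), then every function h in the ℂ-linear span of {(D_{0,g₀})ⁿ(P·f) : n ≥ 0} satisfies h(α) = 0. -/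
open Complex

/-- if `α` is a common zero of a polynomial `P` and of `g₀`, then every
function in the `ℂ`-linear span of `{(D_{0,g₀})ⁿ(P·f) : n ≥ 0}` vanishes at `α`. -/
theorem span_orbit_vanishes_at_common_zero
    (g₀ : ℂ → ℂ) (hg₀ : Differentiable ℂ g₀) (hg₀0 : g₀ 0 = 1)
    (f : ℂ → ℂ) (hf : Differentiable ℂ f) (P : Polynomial ℂ)
    (α : ℂ) (hPα : P.eval α = 0) (hgα : g₀ α = 0) :
    ∀ h ∈ Submodule.span ℂ
      (Set.range fun n : ℕ => (pommiez g₀)^[n] (fun z => P.eval z * f z)),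
      h α = 0 := by
  have hα : α ≠ 0 := by
    intro h; rw [h, hg₀0] at hgα; exact one_ne_zero hgα
  have key : ∀ n : ℕ, (pommiez g₀)^[n] (fun z => P.eval z * f z) α = 0 := by
    intro n
    induction n with
    | zero => simp [hPα]
    | succ n ih =>
      rw [Function.iterate_succ_apply']
      simp [pommiez, hα, ih, hgα]
  intro h hh
  induction hh using Submodule.span_induction with
  | mem x hx => obtain ⟨n, rfl⟩ := hx; exact key n
  | zero => rfl
  | add x y _ _ hx hy => simp [Pi.add_apply, hx, hy]
  | smul c x _ hx => simp [Pi.smul_apply, hx]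
end
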